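/- arXiv:2409.19859 — 4 statements merged into one kernel-verified Lean document; each statement's English description precedes it below -/
import Mathlib

section
/- There exists a constant C > 0 (the spectral constant) such that for every ν ∈ (0,1], every k ∈ ℤ²\{0} with |k| = √(k₁²+k₂²), every θ_k ∈ 𝕋, and every η ∈ H¹(𝕋;ℂ): ν^{1/2}|k|^{1/2} ‖η‖²_{L²(𝕋)} ≤ ν ‖∂_θ η‖²_{L²(𝕋)} + C |k| ‖sin(θ − θ_k) η‖²_{L²(𝕋)}. -/
/-!
Write `S = ∫ sin²(θ - θₖ) ‖η‖²`. Since `1 = 2 sin²(θ - θₖ) + cos (2(θ - θₖ))`, it suffices to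
bound `∫ cos (2(θ - θₖ)) ‖η‖²`; integrating by parts against `sin (2(θ - θₖ)) / 2` turns it into
`-∫ sin cos · 2⟪η, η'⟫`, which Cauchy–Schwarz and AM–GM bound by `S / t + t ‖η'‖²` for every
`t > 0`. The choice `t = √ν / √|k|` balances the two terms, and `√ν √|k| ≤ |k|` absorbs the
remaining `2S`.
-/

open Real

lemma integral_deriv_mul_eq_neg_integral_mul_deriv {a b : ℝ} {u u' v v' : ℝ → ℝ}
    (hu : ∀ x, HasDerivAt u (u' x) x) (hv : ∀ x, HasDerivAt v (v' x) x)
    (hu' : Continuous u') (hv' : Continuous v') (hua : u b = u a) (hva : v b = v a) :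
    ∫ x in a..b, u' x * v x = -∫ x in a..b, u x * v' x := by
  rw [intervalIntegral.integral_mul_deriv_eq_deriv_mul (fun x _ => hu x) (fun x _ => hv x)
    (hu'.intervalIntegrable a b) (hv'.intervalIntegrable a b), hua, hva]
  ring

lemma two_mul_le_div_add_mul {a b t : ℝ} (ht : 0 < t) : 2 * a * b ≤ a ^ 2 / t + t * b ^ 2 := by
  rw [div_add' _ _ _ ht.ne', le_div_iff₀ ht]
  nlinarith [sq_nonneg (a - t * b)]

section InnerProductSpace

variable {E : Type*} [NormedAddCommGroup E] [InnerProductSpace ℝ E]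

lemma neg_sin_two_mul_mul_inner_le (θ : ℝ) (x y : E) {t : ℝ} (ht : 0 < t) :
    -(sin (2 * θ) / 2 * (2 * inner ℝ x y)) ≤ sin θ ^ 2 * ‖x‖ ^ 2 / t + t * ‖y‖ ^ 2 := by
  have hcos : |cos θ| * |inner ℝ x y| ≤ ‖x‖ * ‖y‖ :=
    (mul_le_of_le_one_left (abs_nonneg _) (abs_cos_le_one θ)).trans
      (abs_real_inner_le_norm x y)
  calc -(sin (2 * θ) / 2 * (2 * inner ℝ x y))
      = -(2 * (sin θ * cos θ * inner ℝ x y)) := by rw [sin_two_mul]; ring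
    _ ≤ 2 * |sin θ * cos θ * inner ℝ x y| := by
        linarith [neg_abs_le (sin θ * cos θ * inner ℝ x y)]
    _ = 2 * |sin θ| * (|cos θ| * |inner ℝ x y|) := by rw [abs_mul, abs_mul]; ring
    _ ≤ 2 * (|sin θ| * ‖x‖) * ‖y‖ := by
        rw [mul_assoc, mul_assoc, mul_assoc]; gcongr
    _ ≤ (|sin θ| * ‖x‖) ^ 2 / t + t * ‖y‖ ^ 2 := two_mul_le_div_add_mul ht
    _ = sin θ ^ 2 * ‖x‖ ^ 2 / t + t * ‖y‖ ^ 2 := by rw [mul_pow, sq_abs]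

variable {η η' : ℝ → E}

lemma integral_cos_two_mul_mul_norm_sq_eq (θk : ℝ) (hη : ∀ θ, HasDerivAt η (η' θ) θ)
    (hη' : Continuous η') (hper : η π = η (-π)) :
    ∫ θ in (-π)..π, cos (2 * (θ - θk)) * ‖η θ‖ ^ 2
      = -∫ θ in (-π)..π, sin (2 * (θ - θk)) / 2 * (2 * inner ℝ (η θ) (η' θ)) := by
  have hηc : Continuous η := continuous_iff_continuousAt.mpr fun θ => (hη θ).continuousAt
  refine integral_deriv_mul_eq_neg_integral_mul_deriv (fun θ => ?_) (fun θ => (hη θ).norm_sq)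
    (by fun_prop) (continuous_const.mul (hηc.inner hη')) ?_ (by rw [hper])
  · simpa using ((((hasDerivAt_id θ).sub_const θk).const_mul 2).sin).div_const 2
  · rw [show 2 * (π - θk) = -(2 * θk) + 2 * π by ring,
      show 2 * (-π - θk) = -(2 * θk) - 2 * π by ring, sin_add_two_pi, sin_sub_two_pi]

theorem integral_norm_sq_le_weighted_add_deriv (θk : ℝ) (hη : ∀ θ, HasDerivAt η (η' θ) θ)
    (hη' : Continuous η') (hper : η π = η (-π)) {t : ℝ} (ht : 0 < t) :
    ∫ θ in (-π)..π, ‖η θ‖ ^ 2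
      ≤ (2 + t⁻¹) * (∫ θ in (-π)..π, sin (θ - θk) ^ 2 * ‖η θ‖ ^ 2)
        + t * ∫ θ in (-π)..π, ‖η' θ‖ ^ 2 := by
  have hηc : Continuous η := continuous_iff_continuousAt.mpr fun θ => (hη θ).continuousAt
  set S := ∫ θ in (-π)..π, sin (θ - θk) ^ 2 * ‖η θ‖ ^ 2
  have hsplit : ∫ θ in (-π)..π, ‖η θ‖ ^ 2
      = 2 * S + ∫ θ in (-π)..π, cos (2 * (θ - θk)) * ‖η θ‖ ^ 2 := by
    rw [← intervalIntegral.integral_const_mul,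
      ← intervalIntegral.integral_add (by apply Continuous.intervalIntegrable; fun_prop)
        (by apply Continuous.intervalIntegrable; fun_prop)]
    refine intervalIntegral.integral_congr fun θ _ => ?_
    simp only [cos_two_mul, cos_sq']
    ring
  have hbound : -∫ θ in (-π)..π, sin (2 * (θ - θk)) / 2 * (2 * inner ℝ (η θ) (η' θ))
      ≤ t⁻¹ * S + t * ∫ θ in (-π)..π, ‖η' θ‖ ^ 2 := by
    rw [← intervalIntegral.integral_neg, ← intervalIntegral.integral_const_mul,
      ← intervalIntegral.integral_const_mul,
      ← intervalIntegral.integral_add (by apply Continuous.intervalIntegrable; fun_prop)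
        (by apply Continuous.intervalIntegrable; fun_prop)]
    refine intervalIntegral.integral_mono_on (by linarith [pi_pos])
      (by apply Continuous.intervalIntegrable; fun_prop)
      (by apply Continuous.intervalIntegrable; fun_prop) fun θ _ => ?_
    exact (neg_sin_two_mul_mul_inner_le (θ - θk) (η θ) (η' θ) ht).trans_eq (by ring)
  rw [hsplit, integral_cos_two_mul_mul_norm_sq_eq θk hη hη' hper]
  linarith

end InnerProductSpace

lemma one_le_sqrt_sq_add_sq {k : ℤ × ℤ} (hk : k ≠ 0) :
    1 ≤ √((k.1 : ℝ) ^ 2 + (k.2 : ℝ) ^ 2) := by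
  rw [one_le_sqrt]
  have hk' : k.1 ≠ 0 ∨ k.2 ≠ 0 := by
    contrapose! hk
    exact Prod.ext hk.1 hk.2
  have h : (1 : ℤ) ≤ k.1 ^ 2 + k.2 ^ 2 := by
    rcases hk' with h | h
    · nlinarith [sq_nonneg k.2, Int.one_le_abs h, sq_abs k.1]
    · nlinarith [sq_nonneg k.1, Int.one_le_abs h, sq_abs k.2]
  exact_mod_cast h

lemma sqrt_mul_sqrt_mul_le_of_forall_le {ν K A B S : ℝ} (hν : 0 < ν) (hν1 : ν ≤ 1)
    (hK : 1 ≤ K) (hS : 0 ≤ S) (hA : ∀ t > 0, A ≤ (2 + t⁻¹) * S + t * B) :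
    √ν * √K * A ≤ ν * B + 3 * K * S := by
  have hsν : 0 < √ν := sqrt_pos.mpr hν
  have hsK : 0 < √K := sqrt_pos.mpr (by linarith)
  have hνK : √ν * √K ≤ K := by
    calc √ν * √K ≤ √K * √K := by gcongr; linarith
      _ = K := mul_self_sqrt (by linarith)
  calc √ν * √K * A ≤ √ν * √K * ((2 + (√ν / √K)⁻¹) * S + √ν / √K * B) :=
        mul_le_mul_of_nonneg_left (hA _ (div_pos hsν hsK)) (by positivity)
    _ = 2 * (√ν * √K) * S + (√K * √K) * S + (√ν * √ν) * B := by field_simp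
    _ ≤ 2 * K * S + K * S + ν * B := by
        rw [mul_self_sqrt hν.le, mul_self_sqrt (by linarith)]; gcongr
    _ = ν * B + 3 * K * S := by ring

/-- spectral (hypocoercivity) inequality: there is a universal constant
C such that ν^{1/2}|k|^{1/2}‖η‖² ≤ ν‖∂_θη‖² + C|k|‖sin(θ-θ_k)η‖². -/
theorem spectral_inequality :
    ∃ C : ℝ, 0 < C ∧
      ∀ (ν : ℝ), ν ∈ Set.Ioc (0 : ℝ) 1 →
      ∀ (k : ℤ × ℤ), k ≠ 0 →
      ∀ (θk : ℝ) (η η' : ℝ → ℂ),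
        (∀ θ, HasDerivAt η (η' θ) θ) →
        Continuous η' →
        Function.Periodic η (2 * π) →
        Real.sqrt ν * Real.sqrt (Real.sqrt ((k.1 : ℝ) ^ 2 + (k.2 : ℝ) ^ 2)) *
            (∫ θ in (-π)..π, ‖η θ‖ ^ 2)
          ≤ ν * (∫ θ in (-π)..π, ‖η' θ‖ ^ 2)
            + C * Real.sqrt ((k.1 : ℝ) ^ 2 + (k.2 : ℝ) ^ 2) *
              (∫ θ in (-π)..π, (Real.sin (θ - θk)) ^ 2 * ‖η θ‖ ^ 2) := by
  refine ⟨3, three_pos, ?_⟩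
  rintro ν ⟨hν, hν1⟩ k hk θk η η' hη hη' hper
  have hperπ : η π = η (-π) := by simpa [show -π + 2 * π = π by ring] using hper (-π)
  exact sqrt_mul_sqrt_mul_le_of_forall_le hν hν1 (one_le_sqrt_sq_add_sq hk)
    (intervalIntegral.integral_nonneg (by linarith [pi_pos]) fun θ _ => by positivity)
    fun t ht => integral_norm_sq_le_weighted_add_deriv θk hη hη' hperπ ht
end

section
/- Let g be a C³ solution on 𝕋 of ∂_t g − κ ∂_θ(g (Ψ * g)) = ν ∂_θ² g, with g > 0, where Ψ(θ) = sin(θ)ψ(θ) for smooth even ψ ≥ 0, and 𝕌 is the primitive of Ψ. Define the free energy F[g] = ν ∫ g log g dθ + (κ/2) ∫∫ 𝕌(θ−w) g(θ) g(w) dw dθ. Then d/dt F[g] = − ∫ g |ν ∂_θ log g + κ (Ψ * g)|² dθ ≤ 0. -/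
open Real MeasureTheory intervalIntegral
open Set

lemma aux_DUI {f f' : ℝ → ℝ → ℝ} {a b : ℝ}
    (hf : Continuous fun p : ℝ × ℝ => f p.1 p.2)
    (hf' : Continuous fun p : ℝ × ℝ => f' p.1 p.2)
    (hd : ∀ x θ, HasDerivAt (fun s => f s θ) (f' x θ) x) (t : ℝ) :
    HasDerivAt (fun s => ∫ θ in a..b, f s θ) (∫ θ in a..b, f' t θ) t := by
  have hcx : ∀ x : ℝ, Continuous (fun θ => f x θ) := fun x =>
    hf.comp (continuous_const.prodMk continuous_id)
  have hcx' : Continuous (fun θ => f' t θ) :=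
    hf'.comp (continuous_const.prodMk continuous_id)
  obtain ⟨C, hC⟩ := ((isCompact_closedBall t 1).prod isCompact_uIcc).exists_bound_of_continuousOn
    (hf'.continuousOn (s := Metric.closedBall t 1 ×ˢ uIcc a b))
  refine (intervalIntegral.hasDerivAt_integral_of_dominated_loc_of_deriv_le
    (F := f) (F' := f') (bound := fun _ => C) (Metric.ball_mem_nhds t one_pos)
    (Filter.Eventually.of_forall fun x => (hcx x).aestronglyMeasurable)
    ((hcx t).intervalIntegrable a b)
    hcx'.aestronglyMeasurable
    (Filter.Eventually.of_forall ?_)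
    intervalIntegrable_const
    (Filter.Eventually.of_forall fun θ _ x _ => hd x θ)).2
  intro θ hθ x hx
  exact hC (x, θ) ⟨Metric.ball_subset_closedBall hx, uIoc_subset_uIcc hθ⟩

lemma aux_fubini {K : ℝ → ℝ → ℝ} (hK : Continuous fun p : ℝ × ℝ => K p.1 p.2) :
    (∫ θ in (-π)..π, ∫ w in (-π)..π, K θ w) = ∫ w in (-π)..π, ∫ θ in (-π)..π, K θ w := by
  have hle : (-π : ℝ) ≤ π := by linarith [Real.pi_pos]
  have hint : Integrable (Function.uncurry K)
      ((volume.restrict (Set.Ioc (-π) π)).prod (volume.restrict (Set.Ioc (-π) π))) := by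
    rw [Measure.prod_restrict]
    have h1 : IntegrableOn (Function.uncurry K) ((Set.Icc (-π) π) ×ˢ (Set.Icc (-π) π)) :=
      (hK.continuousOn).integrableOn_compact (isCompact_Icc.prod isCompact_Icc)
    exact h1.mono_set (Set.prod_mono Set.Ioc_subset_Icc_self Set.Ioc_subset_Icc_self)
  simp only [intervalIntegral.integral_of_le hle]
  exact MeasureTheory.integral_integral_swap hint

lemma aux_IBP {u v u' v' : ℝ → ℝ}
    (hu : ∀ x, HasDerivAt u (u' x) x) (hv : ∀ x, HasDerivAt v (v' x) x)
    (hu' : IntervalIntegrable u' volume (-π) π) (hv' : IntervalIntegrable v' volume (-π) π)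
    (hbc : u π * v π = u (-π) * v (-π)) :
    ∫ x in (-π)..π, u' x * v x = - ∫ x in (-π)..π, u x * v' x := by
  have key := intervalIntegral.integral_deriv_mul_eq_sub (a := -π) (b := π)
    (fun x _ => hu x) (fun x _ => hv x) hu' hv'
  have hcu : Continuous u :=
    Differentiable.continuous (fun x => (hu x).differentiableAt)
  have hcv : Continuous v :=
    Differentiable.continuous (fun x => (hv x).differentiableAt)
  have i1 : IntervalIntegrable (fun x => u' x * v x) volume (-π) π :=
    hu'.mul_continuousOn hcv.continuousOn
  have i2 : IntervalIntegrable (fun x => u x * v' x) volume (-π) π :=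
    hv'.continuousOn_mul hcu.continuousOn
  have hadd := intervalIntegral.integral_add i1 i2
  rw [hadd] at key
  rw [hbc, sub_self] at key
  linarith

/-- the free energy F[g] = ν∫g log g + (κ/2)∫∫𝕌(θ-w)g(θ)g(w) decays
along positive C³ solutions of ∂_t g - κ∂_θ(g(Ψ*g)) = ν∂²_θ g, with
dF/dt = -∫ g|ν∂_θ log g + κΨ*g|² ≤ 0. -/
theorem free_energy_dissipation
    (κ ν : ℝ) (hκ : 0 < κ) (hν : 0 < ν)
    (ψ Ψ U : ℝ → ℝ)
    (hψ : ContDiff ℝ (⊤ : ℕ∞) ψ) (hψe : ∀ θ, ψ (-θ) = ψ θ)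
    (hψ0 : ∀ θ, 0 ≤ ψ θ) (hψp : Function.Periodic ψ (2 * π))
    (hΨ : ∀ θ, Ψ θ = Real.sin θ * ψ θ)
    (hU : ∀ θ, U θ = ∫ η in (-π)..θ, Ψ η)
    (g gt gθ gθθ D conv : ℝ → ℝ → ℝ)
    (hreg : ContDiff ℝ 3 (fun p : ℝ × ℝ => g p.1 p.2))
    (hpos : ∀ t θ, 0 < g t θ)
    (hper : ∀ t θ, g t (θ + 2 * π) = g t θ)
    (hconv : ∀ t θ, conv t θ = ∫ w in (-π)..π, Ψ (θ - w) * g t w)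
    (hgt : ∀ t θ, HasDerivAt (fun s => g s θ) (gt t θ) t)
    (hgθ : ∀ t θ, HasDerivAt (fun x => g t x) (gθ t θ) θ)
    (hgθθ : ∀ t θ, HasDerivAt (fun x => gθ t x) (gθθ t θ) θ)
    (hD : ∀ t θ, HasDerivAt (fun x => g t x * conv t x) (D t θ) θ)
    (hPDE : ∀ t θ, gt t θ - κ * D t θ = ν * gθθ t θ)
    (F Diss : ℝ → ℝ)
    (hF : ∀ t, F t = ν * (∫ θ in (-π)..π, g t θ * Real.log (g t θ))
      + (κ / 2) * (∫ θ in (-π)..π, ∫ w in (-π)..π, U (θ - w) * g t θ * g t w))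
    (hDiss : ∀ t, Diss t = ∫ θ in (-π)..π,
      g t θ * (ν * (gθ t θ / g t θ) + κ * conv t θ) ^ 2) :
    ∀ t, HasDerivAt F (-(Diss t)) t ∧ -(Diss t) ≤ 0 := by
  intro t₀
  have hπ : (0:ℝ) < π := Real.pi_pos
  have hle : (-π : ℝ) ≤ π := by linarith
  -- ## Joint continuity of g and its derivatives
  have cg : Continuous fun p : ℝ × ℝ => g p.1 p.2 := hreg.continuous
  have hgdiff : Differentiable ℝ fun p : ℝ × ℝ => g p.1 p.2 :=
    hreg.differentiable (by norm_num)
  have hgt_eq : ∀ s θ, gt s θ = fderiv ℝ (fun p : ℝ × ℝ => g p.1 p.2) (s, θ) (1, 0) := by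
    intro s θ
    have h1 : HasDerivAt (fun x : ℝ => (x, θ)) ((1:ℝ), (0:ℝ)) s :=
      (hasDerivAt_id s).prodMk (hasDerivAt_const s θ)
    have h2 := ((hgdiff (s, θ)).hasFDerivAt).comp_hasDerivAt s h1
    exact (hgt s θ).unique h2
  have hgθ_eq : ∀ s θ, gθ s θ = fderiv ℝ (fun p : ℝ × ℝ => g p.1 p.2) (s, θ) (0, 1) := by
    intro s θ
    have h1 : HasDerivAt (fun x : ℝ => (s, x)) ((0:ℝ), (1:ℝ)) θ :=
      (hasDerivAt_const θ s).prodMk (hasDerivAt_id θ)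
    exact (hgθ s θ).unique (((hgdiff (s, θ)).hasFDerivAt).comp_hasDerivAt θ h1)
  have cfder : Continuous (fderiv ℝ (fun p : ℝ × ℝ => g p.1 p.2)) :=
    hreg.continuous_fderiv (by norm_num)
  have cgt : Continuous fun p : ℝ × ℝ => gt p.1 p.2 :=
    ((cfder.clm_apply continuous_const).congr fun p => by rw [← hgt_eq p.1 p.2])
  have cgθ : Continuous fun p : ℝ × ℝ => gθ p.1 p.2 :=
    ((cfder.clm_apply continuous_const).congr fun p => by rw [← hgθ_eq p.1 p.2])
  have hG2 : ContDiff ℝ 2 fun p : ℝ × ℝ =>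
      fderiv ℝ (fun q : ℝ × ℝ => g q.1 q.2) p ((0:ℝ), (1:ℝ)) :=
    (hreg.fderiv_right (by norm_num)).clm_apply contDiff_const
  have hgθθ_eq : ∀ s θ, gθθ s θ = fderiv ℝ (fun p : ℝ × ℝ =>
      fderiv ℝ (fun q : ℝ × ℝ => g q.1 q.2) p ((0:ℝ), (1:ℝ))) (s, θ) (0, 1) := by
    intro s θ
    have h1 : HasDerivAt (fun x : ℝ => (s, x)) ((0:ℝ), (1:ℝ)) θ :=
      (hasDerivAt_const θ s).prodMk (hasDerivAt_id θ)
    have h2 := ((hG2.differentiable (by norm_num) (s, θ)).hasFDerivAt).comp_hasDerivAt θ h1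
    have h4 : (fun x => gθ s x) = fun x =>
        fderiv ℝ (fun q : ℝ × ℝ => g q.1 q.2) (s, x) ((0:ℝ), (1:ℝ)) :=
      funext fun x => hgθ_eq s x
    exact (hgθθ s θ).unique (h4 ▸ h2)
  have cgθθ : Continuous fun p : ℝ × ℝ => gθθ p.1 p.2 :=
    (((hG2.continuous_fderiv (by norm_num)).clm_apply continuous_const).congr
      fun p => by rw [← hgθθ_eq p.1 p.2])
  -- ## Ψ and U
  have cψ : Continuous ψ := hψ.continuous
  have cΨ : Continuous Ψ :=
    (Real.continuous_sin.mul cψ).congr fun θ => (hΨ θ).symm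
  have hΨodd : ∀ θ, Ψ (-θ) = -Ψ θ := by
    intro θ; rw [hΨ, hΨ, Real.sin_neg, hψe]; ring
  have hΨper : ∀ θ, Ψ (θ + 2 * π) = Ψ θ := by
    intro θ; rw [hΨ, hΨ, Real.sin_add_two_pi, hψp θ]
  have hUd : ∀ θ, HasDerivAt U (Ψ θ) θ := by
    intro θ
    have h1 : HasDerivAt (fun x => ∫ η in (-π)..x, Ψ η) (Ψ θ) θ :=
      intervalIntegral.integral_hasDerivAt_right (cΨ.intervalIntegrable _ _)
        (cΨ.stronglyMeasurableAtFilter _ _) cΨ.continuousAt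
    exact h1.congr_of_eventuallyEq (Filter.Eventually.of_forall fun x => hU x)
  have cU : Continuous U := Differentiable.continuous fun x => (hUd x).differentiableAt
  have intΨ : (∫ η in (-π)..π, Ψ η) = 0 := by
    have h1 : (∫ x in (-π)..π, Ψ (-x)) = ∫ x in (-π)..π, Ψ x := by
      rw [intervalIntegral.integral_comp_neg]; norm_num
    have h2 : (∫ x in (-π)..π, Ψ (-x)) = -∫ x in (-π)..π, Ψ x := by
      simp only [hΨodd]; exact intervalIntegral.integral_neg
    linarith
  have hUper : ∀ x, U (x + 2 * π) = U x := by
    intro x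
    have hadd : (∫ η in (-π)..x, Ψ η) + (∫ η in x..(x + 2*π), Ψ η)
        = ∫ η in (-π)..(x + 2*π), Ψ η :=
      intervalIntegral.integral_add_adjacent_intervals (cΨ.intervalIntegrable _ _)
        (cΨ.intervalIntegrable _ _)
    have hp : (∫ η in x..(x + 2*π), Ψ η) = ∫ η in (-π)..((-π) + 2*π), Ψ η :=
      (Function.Periodic.intervalIntegral_add_eq (fun y => hΨper y) x (-π))
    have he : (-π) + 2*π = π := by ring
    rw [he] at hp
    rw [hU, hU, ← hadd, hp, intΨ, add_zero]
  have hUeven : ∀ x, U (-x) = U x := by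
    intro x
    have hadd : (∫ η in (-π)..x, Ψ η) + (∫ η in x..π, Ψ η) = ∫ η in (-π)..π, Ψ η :=
      intervalIntegral.integral_add_adjacent_intervals (cΨ.intervalIntegrable _ _)
        (cΨ.intervalIntegrable _ _)
    have h1 : (∫ η in x..π, Ψ η) = - U x := by
      rw [hU]; rw [intΨ] at hadd; linarith
    have h2 : U (-x) = ∫ η in x..π, Ψ (-η) := by
      rw [hU, intervalIntegral.integral_comp_neg]
    rw [h2]
    simp only [hΨodd]
    rw [intervalIntegral.integral_neg, h1, neg_neg]
  have hUsymm : ∀ a b : ℝ, U (a - b) = U (b - a) := by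
    intro a b
    have := hUeven (b - a); rw [neg_sub] at this; exact this
  -- ## periodicity of derived quantities
  have hgθper : ∀ s θ, gθ s (θ + 2*π) = gθ s θ := by
    intro s θ
    have h1 : HasDerivAt (fun x => g s (x + 2*π)) (gθ s (θ + 2*π) * 1) θ :=
      (hgθ s (θ + 2*π)).comp θ ((hasDerivAt_id θ).add_const (2*π))
    have h2 : (fun x => g s (x + 2*π)) = fun x => g s x := funext fun x => hper s x
    have h3 := (hgθ s θ).unique (h2 ▸ h1)
    simpa using h3.symm
  have hconvper : ∀ s θ, conv s (θ + 2*π) = conv s θ := by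
    intro s θ; rw [hconv, hconv]
    apply intervalIntegral.integral_congr; intro w _
    beta_reduce
    have h1 := hΨper (θ - w)
    rw [show θ + 2*π - w = θ - w + 2*π by ring, h1]
  have cconv : Continuous fun p : ℝ × ℝ => conv p.1 p.2 := by
    have h1 : Continuous fun p : ℝ × ℝ => ∫ w in (-π)..π, Ψ (p.2 - w) * g p.1 w := by
      apply intervalIntegral.continuous_parametric_intervalIntegral_of_continuous'
      exact (cΨ.comp (continuous_fst.snd.sub continuous_snd)).mul
        (cg.comp (continuous_fst.fst.prodMk continuous_snd))
    exact h1.congr fun p => (hconv p.1 p.2).symm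
  -- ## the convolved potential h and its derivatives
  set h : ℝ → ℝ → ℝ := fun s θ => ∫ w in (-π)..π, U (θ - w) * g s w with hh
  set ht : ℝ → ℝ → ℝ := fun s θ => ∫ w in (-π)..π, U (θ - w) * gt s w with hht
  have ch : Continuous fun p : ℝ × ℝ => h p.1 p.2 := by
    apply intervalIntegral.continuous_parametric_intervalIntegral_of_continuous'
    exact (cU.comp (continuous_fst.snd.sub continuous_snd)).mul
      (cg.comp (continuous_fst.fst.prodMk continuous_snd))
  have cht : Continuous fun p : ℝ × ℝ => ht p.1 p.2 := by
    apply intervalIntegral.continuous_parametric_intervalIntegral_of_continuous'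
    exact (cU.comp (continuous_fst.snd.sub continuous_snd)).mul
      (cgt.comp (continuous_fst.fst.prodMk continuous_snd))
  have hdh : ∀ s θ, HasDerivAt (fun x => h x θ) (ht s θ) s := by
    intro s θ
    apply aux_DUI (f := fun x w => U (θ - w) * g x w) (f' := fun x w => U (θ - w) * gt x w)
    · exact (cU.comp (continuous_const.sub continuous_snd)).mul cg
    · exact (cU.comp (continuous_const.sub continuous_snd)).mul cgt
    · intro x w; exact (hgt x w).const_mul (U (θ - w))
  have hhper : ∀ s θ, h s (θ + 2*π) = h s θ := by
    intro s θ
    apply intervalIntegral.integral_congr; intro w _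
    beta_reduce
    have h1 := hUper (θ - w)
    rw [show θ + 2*π - w = θ - w + 2*π by ring, h1]
  have hdhθ : ∀ s θ, HasDerivAt (fun x => h s x) (conv s θ) θ := by
    intro s θ
    have h1 := aux_DUI (a := -π) (b := π) (f := fun x w => U (x - w) * g s w) (f' := fun x w => Ψ (x - w) * g s w)
      ((cU.comp (continuous_fst.sub continuous_snd)).mul
        (cg.comp (continuous_const.prodMk continuous_snd)))
      ((cΨ.comp (continuous_fst.sub continuous_snd)).mul
        (cg.comp (continuous_const.prodMk continuous_snd)))
      (fun x w => by
        simpa using ((hUd (x - w)).comp x ((hasDerivAt_id x).sub_const w)).mul_const (g s w)) θ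
    rw [hconv]
    exact h1
  -- ## derivative of conv in θ and the formula for D
  have hψd : ∀ x, HasDerivAt ψ (deriv ψ x) x := fun x => (hψ.differentiable (by simp) x).hasDerivAt
  have hΨd : ∀ x, HasDerivAt Ψ (Real.cos x * ψ x + Real.sin x * deriv ψ x) x := by
    intro x
    have h1 : HasDerivAt (fun y => Real.sin y * ψ y)
        (Real.cos x * ψ x + Real.sin x * deriv ψ x) x := (Real.hasDerivAt_sin x).mul (hψd x)
    exact h1.congr_of_eventuallyEq (Filter.Eventually.of_forall fun y => hΨ y)
  have cΨ' : Continuous fun x => Real.cos x * ψ x + Real.sin x * deriv ψ x :=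
    (Real.continuous_cos.mul cψ).add (Real.continuous_sin.mul (hψ.continuous_deriv (by simp)))
  set convθ : ℝ → ℝ → ℝ :=
    fun s θ => ∫ w in (-π)..π, (Real.cos (θ-w) * ψ (θ-w) + Real.sin (θ-w) * deriv ψ (θ-w)) * g s w
    with hconvθ
  have hdconvθ : ∀ s θ, HasDerivAt (fun x => conv s x) (convθ s θ) θ := by
    intro s θ
    have h1 := aux_DUI (a := -π) (b := π) (f := fun x w => Ψ (x - w) * g s w)
      (f' := fun x w => (Real.cos (x-w) * ψ (x-w) + Real.sin (x-w) * deriv ψ (x-w)) * g s w)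
      ((cΨ.comp (continuous_fst.sub continuous_snd)).mul
        (cg.comp (continuous_const.prodMk continuous_snd)))
      ((cΨ'.comp (continuous_fst.sub continuous_snd)).mul
        (cg.comp (continuous_const.prodMk continuous_snd)))
      (fun x w => by
        simpa using ((hΨd (x - w)).comp x ((hasDerivAt_id x).sub_const w)).mul_const (g s w)) θ
    have h2 : (fun x => conv s x) = fun x => ∫ w in (-π)..π, Ψ (x - w) * g s w :=
      funext fun x => hconv s x
    rw [h2]
    exact h1
  have cconvθ0 : Continuous fun θ => convθ t₀ θ := by
    apply intervalIntegral.continuous_parametric_intervalIntegral_of_continuous'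
      (f := fun (θ : ℝ) w => (Real.cos (θ-w) * ψ (θ-w) + Real.sin (θ-w) * deriv ψ (θ-w)) * g t₀ w)
    exact (cΨ'.comp (continuous_fst.sub continuous_snd)).mul
      (cg.comp (continuous_const.prodMk continuous_snd))
  have hDeq : ∀ θ, D t₀ θ = gθ t₀ θ * conv t₀ θ + g t₀ θ * convθ t₀ θ := by
    intro θ
    exact (hD t₀ θ).unique ((hgθ t₀ θ).mul (hdconvθ t₀ θ))
  -- fixed-time continuity in θ
  have sl : ∀ {k : ℝ → ℝ → ℝ}, (Continuous fun p : ℝ × ℝ => k p.1 p.2) →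
      Continuous fun θ => k t₀ θ := fun hk => hk.comp (continuous_const.prodMk continuous_id)
  have cg0 := sl cg
  have cgt0 := sl cgt
  have cgθ0 := sl cgθ
  have cgθθ0 := sl cgθθ
  have cconv0 := sl cconv
  have ch0 := sl ch
  have cht0 := sl cht
  have cD0 : Continuous fun θ => D t₀ θ :=
    ((cgθ0.mul cconv0).add (cg0.mul cconvθ0)).congr fun θ => (hDeq θ).symm
  have hgne : ∀ s θ, g s θ ≠ 0 := fun s θ => (hpos s θ).ne'
  have clog : Continuous fun θ => Real.log (g t₀ θ) + 1 :=
    (cg0.log fun θ => hgne t₀ θ).add continuous_const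
  have cv' : Continuous fun θ => gθ t₀ θ / g t₀ θ := cgθ0.div cg0 fun θ => hgne t₀ θ
  -- boundary values
  have bdry : ∀ {φ : ℝ → ℝ}, (∀ θ, φ (θ + 2*π) = φ θ) → φ π = φ (-π) := by
    intro φ hφ
    have h2 := hφ (-π)
    rw [show (-π) + 2*π = π by ring] at h2
    exact h2
  have bg : g t₀ π = g t₀ (-π) := bdry (hper t₀)
  have bgθ : gθ t₀ π = gθ t₀ (-π) := bdry (hgθper t₀)
  have bconv : conv t₀ π = conv t₀ (-π) := bdry (hconvper t₀)
  have bh : h t₀ π = h t₀ (-π) := bdry (hhper t₀)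
  -- ## derivative of the entropy term
  have hA : HasDerivAt (fun s => ∫ θ in (-π)..π, g s θ * Real.log (g s θ))
      (∫ θ in (-π)..π, gt t₀ θ * (Real.log (g t₀ θ) + 1)) t₀ := by
    apply aux_DUI (f := fun s θ => g s θ * Real.log (g s θ))
      (f' := fun s θ => gt s θ * (Real.log (g s θ) + 1))
    · exact cg.mul (cg.log fun p => hgne p.1 p.2)
    · exact cgt.mul ((cg.log fun p => hgne p.1 p.2).add continuous_const)
    · intro x θ
      have h1 : HasDerivAt (fun s => Real.log (g s θ)) (gt x θ / g x θ) x :=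
        (hgt x θ).log (hgne x θ)
      have h2 := (hgt x θ).mul h1
      have h3 : g x θ * (gt x θ / g x θ) = gt x θ := by
        field_simp
        exact mul_div_cancel_left₀ _ (hgne x θ)
      refine h2.congr_deriv ?_
      rw [h3]
      ring
  -- ## derivative of the interaction term
  have hBeq : ∀ s, (∫ θ in (-π)..π, ∫ w in (-π)..π, U (θ - w) * g s θ * g s w)
      = ∫ θ in (-π)..π, g s θ * h s θ := by
    intro s
    apply intervalIntegral.integral_congr; intro θ _
    beta_reduce
    show (∫ w in (-π)..π, U (θ - w) * g s θ * g s w)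
      = g s θ * ∫ w in (-π)..π, U (θ - w) * g s w
    rw [← intervalIntegral.integral_const_mul]
    apply intervalIntegral.integral_congr; intro w _
    beta_reduce; ring
  have hB : HasDerivAt (fun s => ∫ θ in (-π)..π, g s θ * h s θ)
      (∫ θ in (-π)..π, (gt t₀ θ * h t₀ θ + g t₀ θ * ht t₀ θ)) t₀ := by
    apply aux_DUI (f := fun s θ => g s θ * h s θ)
      (f' := fun s θ => gt s θ * h s θ + g s θ * ht s θ)
    · exact cg.mul ch
    · exact (cgt.mul ch).add (cg.mul cht)
    · intro x θ; exact (hgt x θ).mul (hdh x θ)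
  -- symmetry
  have hsym : (∫ θ in (-π)..π, g t₀ θ * ht t₀ θ) = ∫ θ in (-π)..π, gt t₀ θ * h t₀ θ := by
    have step1 : (∫ θ in (-π)..π, g t₀ θ * ht t₀ θ)
        = ∫ θ in (-π)..π, ∫ w in (-π)..π, g t₀ θ * (U (θ - w) * gt t₀ w) := by
      apply intervalIntegral.integral_congr; intro θ _
      beta_reduce
      show g t₀ θ * ∫ w in (-π)..π, U (θ - w) * gt t₀ w
        = ∫ w in (-π)..π, g t₀ θ * (U (θ - w) * gt t₀ w)
      rw [← intervalIntegral.integral_const_mul]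
    rw [step1, aux_fubini (K := fun θ w => g t₀ θ * (U (θ - w) * gt t₀ w))
      ((cg.comp (continuous_const.prodMk continuous_fst)).mul
        (((cU.comp (continuous_fst.sub continuous_snd)).mul
          (cgt.comp (continuous_const.prodMk continuous_snd)))))]
    apply intervalIntegral.integral_congr; intro w _
    beta_reduce
    show (∫ θ in (-π)..π, g t₀ θ * (U (θ - w) * gt t₀ w))
      = gt t₀ w * ∫ θ in (-π)..π, U (w - θ) * g t₀ θ
    rw [← intervalIntegral.integral_const_mul]
    apply intervalIntegral.integral_congr; intro θ _
    beta_reduce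
    rw [hUsymm θ w]; ring
  -- ## integration by parts
  have ibp1 : (∫ θ in (-π)..π, gθθ t₀ θ * (Real.log (g t₀ θ) + 1))
      = - ∫ θ in (-π)..π, gθ t₀ θ * (gθ t₀ θ / g t₀ θ) := by
    apply aux_IBP (hgθθ t₀) (fun θ => ((hgθ t₀ θ).log (hgne t₀ θ)).add_const 1)
      (cgθθ0.intervalIntegrable _ _) (cv'.intervalIntegrable _ _)
    rw [bgθ, bg]
  have ibp2 : (∫ θ in (-π)..π, D t₀ θ * (Real.log (g t₀ θ) + 1))
      = - ∫ θ in (-π)..π, (g t₀ θ * conv t₀ θ) * (gθ t₀ θ / g t₀ θ) := by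
    apply aux_IBP (hD t₀) (fun θ => ((hgθ t₀ θ).log (hgne t₀ θ)).add_const 1)
      (cD0.intervalIntegrable _ _) (cv'.intervalIntegrable _ _)
    rw [bg, bconv]
  have ibp3 : (∫ θ in (-π)..π, gθθ t₀ θ * h t₀ θ)
      = - ∫ θ in (-π)..π, gθ t₀ θ * conv t₀ θ := by
    apply aux_IBP (hgθθ t₀) (fun θ => hdhθ t₀ θ)
      (cgθθ0.intervalIntegrable _ _) (cconv0.intervalIntegrable _ _)
    rw [bgθ, bh]
  have ibp4 : (∫ θ in (-π)..π, D t₀ θ * h t₀ θ)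
      = - ∫ θ in (-π)..π, (g t₀ θ * conv t₀ θ) * conv t₀ θ := by
    apply aux_IBP (hD t₀) (fun θ => hdhθ t₀ θ)
      (cD0.intervalIntegrable _ _) (cconv0.intervalIntegrable _ _)
    rw [bg, bconv, bh]
  -- named integrals
  have hI23 : (∫ θ in (-π)..π, (g t₀ θ * conv t₀ θ) * (gθ t₀ θ / g t₀ θ))
      = ∫ θ in (-π)..π, gθ t₀ θ * conv t₀ θ := by
    apply intervalIntegral.integral_congr; intro θ _
    beta_reduce
    have hg := hgne t₀ θ
    field_simp
  -- PDE substitution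
  have hgt_pde : ∀ θ, gt t₀ θ = ν * gθθ t₀ θ + κ * D t₀ θ := by
    intro θ; linarith [hPDE t₀ θ]
  have EA : (∫ θ in (-π)..π, gt t₀ θ * (Real.log (g t₀ θ) + 1)) = -(ν * (∫ θ in (-π)..π, gθ t₀ θ * (gθ t₀ θ / g t₀ θ))
        + κ * ∫ θ in (-π)..π, gθ t₀ θ * conv t₀ θ) := by
    have step : (∫ θ in (-π)..π, gt t₀ θ * (Real.log (g t₀ θ) + 1))
        = (∫ θ in (-π)..π, ν * (gθθ t₀ θ * (Real.log (g t₀ θ) + 1)))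
          + ∫ θ in (-π)..π, κ * (D t₀ θ * (Real.log (g t₀ θ) + 1)) := by
      rw [← intervalIntegral.integral_add
        (f := fun θ => ν * (gθθ t₀ θ * (Real.log (g t₀ θ) + 1)))
        (g := fun θ => κ * (D t₀ θ * (Real.log (g t₀ θ) + 1)))
        ((continuous_const.mul (cgθθ0.mul clog)).intervalIntegrable _ _)
        ((continuous_const.mul (cD0.mul clog)).intervalIntegrable _ _)]
      apply intervalIntegral.integral_congr; intro θ _
      beta_reduce
      rw [hgt_pde θ]; ring
    rw [step, intervalIntegral.integral_const_mul, intervalIntegral.integral_const_mul,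
      ibp1, ibp2, hI23]
    ring
  have EB : (∫ θ in (-π)..π, gt t₀ θ * h t₀ θ) = -(ν * (∫ θ in (-π)..π, gθ t₀ θ * conv t₀ θ)
        + κ * ∫ θ in (-π)..π, (g t₀ θ * conv t₀ θ) * conv t₀ θ) := by
    have step : (∫ θ in (-π)..π, gt t₀ θ * h t₀ θ)
        = (∫ θ in (-π)..π, ν * (gθθ t₀ θ * h t₀ θ))
          + ∫ θ in (-π)..π, κ * (D t₀ θ * h t₀ θ) := by
      rw [← intervalIntegral.integral_add
        (f := fun θ => ν * (gθθ t₀ θ * h t₀ θ)) (g := fun θ => κ * (D t₀ θ * h t₀ θ))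
        ((continuous_const.mul (cgθθ0.mul ch0)).intervalIntegrable _ _)
        ((continuous_const.mul (cD0.mul ch0)).intervalIntegrable _ _)]
      apply intervalIntegral.integral_congr; intro θ _
      beta_reduce
      rw [hgt_pde θ]; ring
    rw [step, intervalIntegral.integral_const_mul, intervalIntegral.integral_const_mul,
      ibp3, ibp4]
    ring
  -- dissipation identity
  have hDisseq : Diss t₀ = ν^2 * (∫ θ in (-π)..π, gθ t₀ θ * (gθ t₀ θ / g t₀ θ))
      + 2*ν*κ * (∫ θ in (-π)..π, gθ t₀ θ * conv t₀ θ)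
      + κ^2 * ∫ θ in (-π)..π, (g t₀ θ * conv t₀ θ) * conv t₀ θ := by
    rw [hDiss]
    have step : (∫ θ in (-π)..π, g t₀ θ * (ν * (gθ t₀ θ / g t₀ θ) + κ * conv t₀ θ) ^ 2)
        = (∫ θ in (-π)..π, (ν^2 * (gθ t₀ θ * (gθ t₀ θ / g t₀ θ))
            + 2*ν*κ * (gθ t₀ θ * conv t₀ θ))
            + κ^2 * ((g t₀ θ * conv t₀ θ) * conv t₀ θ)) := by
      apply intervalIntegral.integral_congr; intro θ _
      beta_reduce
      have hg := hgne t₀ θ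
      field_simp
      ring
    rw [step, intervalIntegral.integral_add
        (f := fun θ => ν^2 * (gθ t₀ θ * (gθ t₀ θ / g t₀ θ)) + 2*ν*κ * (gθ t₀ θ * conv t₀ θ))
        (g := fun θ => κ^2 * ((g t₀ θ * conv t₀ θ) * conv t₀ θ))
        (((continuous_const.mul (cgθ0.mul cv')).add (continuous_const.mul (cgθ0.mul cconv0))).intervalIntegrable _ _)
        ((continuous_const.mul ((cg0.mul cconv0).mul cconv0)).intervalIntegrable _ _),
      intervalIntegral.integral_add
        (f := fun θ => ν^2 * (gθ t₀ θ * (gθ t₀ θ / g t₀ θ)))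
        (g := fun θ => 2*ν*κ * (gθ t₀ θ * conv t₀ θ))
        ((continuous_const.mul (cgθ0.mul cv')).intervalIntegrable _ _)
        ((continuous_const.mul (cgθ0.mul cconv0)).intervalIntegrable _ _),
      intervalIntegral.integral_const_mul, intervalIntegral.integral_const_mul,
      intervalIntegral.integral_const_mul]
  -- ## assemble
  have hsplit : (∫ θ in (-π)..π, (gt t₀ θ * h t₀ θ + g t₀ θ * ht t₀ θ))
      = (∫ θ in (-π)..π, gt t₀ θ * h t₀ θ) + ∫ θ in (-π)..π, g t₀ θ * ht t₀ θ :=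
    intervalIntegral.integral_add ((cgt0.mul ch0).intervalIntegrable _ _)
      ((cg0.mul cht0).intervalIntegrable _ _)
  constructor
  · have hFfun : F = fun s => ν * (∫ θ in (-π)..π, g s θ * Real.log (g s θ))
        + (κ/2) * (∫ θ in (-π)..π, g s θ * h s θ) := by
      funext s; rw [hF s, hBeq s]
    rw [hFfun]
    have hcomb := (hA.const_mul ν).add (hB.const_mul (κ/2))
    refine hcomb.congr_deriv ?_
    rw [hsplit, hsym, EA, EB, hDisseq]
    ring
  · have : 0 ≤ Diss t₀ := by
      rw [hDiss]
      apply intervalIntegral.integral_nonneg hle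
      intro θ _
      exact mul_nonneg (hpos t₀ θ).le (sq_nonneg _)
    linarith
end

section
/- For Ψ(θ) = sin(θ), the Fourier coefficient of 𝕌₀(θ) = −1 − cos(θ) at ℓ = ±1 equals −π, and hence the constant state g ≡ 1/(2π) of the homogeneous Vicsek equation is linearly stable if κ/ν < 2 and linearly unstable if κ/ν > 2. -/
/-!
Expanding `cos θ = (e^{iθ} + e^{-iθ}) / 2` turns the Fourier coefficients of `a + b cos θ` into
integrals of `e^{ikθ}` over a full period, which vanish unless `k = 0`. Hence `𝕌₀̂(±1) = -π`
and `𝕌₀̂(ℓ) = 0` for `|ℓ| ≥ 2`, so both criteria reduce to comparing `κ / 2` with `ν`.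
-/

open Real MeasureTheory intervalIntegral

open Complex in
lemma integral_exp_int_mul_I (k : ℤ) :
    ∫ θ in (-π)..π, exp (I * k * θ) = if k = 0 then (2 * π : ℂ) else 0 := by
  split_ifs with hk
  · subst hk
    simp only [Int.cast_zero, mul_zero, zero_mul, Complex.exp_zero, intervalIntegral.integral_const,
      sub_neg_eq_add, real_smul, ofReal_add, mul_one]
    ring
  · have hc : I * k ≠ 0 := mul_ne_zero I_ne_zero (Int.cast_ne_zero.2 hk)
    have hperiod : I * k * π = I * k * (-π : ℝ) + k * (2 * π * I) := by push_cast; ring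
    rw [integral_exp_mul_complex hc, hperiod, Complex.exp_add, exp_int_mul_two_pi_mul_I, mul_one,
      sub_self, zero_div]

open Complex in
lemma affine_cos_mul_exp_eq (a b : ℝ) (ℓ : ℤ) (θ : ℝ) :
    ((a + b * Real.cos θ : ℝ) : ℂ) * exp (-I * ℓ * θ) =
      a * exp (I * (-ℓ : ℤ) * θ) +
        b / 2 * (exp (I * (1 - ℓ : ℤ) * θ) + exp (I * (-1 - ℓ : ℤ) * θ)) := by
  have hplus : I * (1 - ℓ : ℤ) * θ = θ * I + -I * ℓ * θ := by push_cast; ring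
  have hminus : I * (-1 - ℓ : ℤ) * θ = -θ * I + -I * ℓ * θ := by push_cast; ring
  have hzero : I * (-ℓ : ℤ) * θ = -I * ℓ * θ := by push_cast; ring
  rw [hplus, hminus, hzero, Complex.exp_add, Complex.exp_add]
  push_cast [ofReal_cos, Complex.cos]
  ring

lemma intervalIntegrable_exp_int_mul_I (k : ℤ) :
    IntervalIntegrable (fun θ : ℝ => Complex.exp (Complex.I * k * θ)) volume (-π) π := by
  apply Continuous.intervalIntegrable
  fun_prop

open Complex in
lemma integral_affine_cos_mul_exp (a b : ℝ) (ℓ : ℤ) :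
    ∫ θ in (-π)..π, ((a + b * Real.cos θ : ℝ) : ℂ) * exp (-I * ℓ * θ) =
      if ℓ = 0 then ((2 * π * a : ℝ) : ℂ) else if ℓ = 1 ∨ ℓ = -1 then ((π * b : ℝ) : ℂ) else 0 := by
  simp_rw [affine_cos_mul_exp_eq]
  rw [integral_add ((intervalIntegrable_exp_int_mul_I _).const_mul _)
      (((intervalIntegrable_exp_int_mul_I _).add (intervalIntegrable_exp_int_mul_I _)).const_mul _),
    intervalIntegral.integral_const_mul, intervalIntegral.integral_const_mul,
    integral_add (intervalIntegrable_exp_int_mul_I _) (intervalIntegrable_exp_int_mul_I _),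
    integral_exp_int_mul_I, integral_exp_int_mul_I, integral_exp_int_mul_I]
  split_ifs <;> first | omega | (push_cast; ring)

theorem sine_kernel_phase_transition_general
    (κ ν : ℝ) (hν : 0 < ν)
    (Uhat : ℤ → ℂ)
    (hUhat : ∀ ℓ : ℤ, Uhat ℓ = ∫ θ in (-π)..π,
      ((-1 - Real.cos θ : ℝ) : ℂ) * Complex.exp (-Complex.I * (ℓ : ℂ) * (θ : ℂ))) :
    Uhat 1 = (-π : ℝ) ∧ Uhat (-1) = (-π : ℝ) ∧
    (κ / ν < 2 → ∀ ℓ : ℤ, ℓ ≠ 0 → κ / (2 * π) * ‖Uhat ℓ‖ < ν) ∧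
    (κ / ν > 2 → ∃ ℓ : ℤ, ℓ ≠ 0 ∧ -(κ / (2 * π)) * (Uhat ℓ).re > ν) := by
  have hU : ∀ ℓ : ℤ, Uhat ℓ = if ℓ = 0 then ((2 * π * -1 : ℝ) : ℂ)
      else if ℓ = 1 ∨ ℓ = -1 then ((π * -1 : ℝ) : ℂ) else 0 := fun ℓ => by
    rw [hUhat, ← integral_affine_cos_mul_exp]
    congr! 4
    ring
  have hU1 : Uhat 1 = (-π : ℝ) := by simp [hU]
  have hUm1 : Uhat (-1) = (-π : ℝ) := by simp [hU]
  have hπ := pi_pos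
  refine ⟨hU1, hUm1, fun hlt ℓ hℓ => ?_, fun hgt => ⟨1, one_ne_zero, ?_⟩⟩
  · have hκν : κ / 2 < ν := by rw [div_lt_iff₀ hν] at hlt; linarith
    by_cases hℓ1 : ℓ = 1 ∨ ℓ = -1
    · have : ‖Uhat ℓ‖ = π := by
        rcases hℓ1 with rfl | rfl <;> simp [hU1, hUm1, abs_of_pos hπ]
      rwa [this, div_mul_eq_mul_div, mul_div_mul_right _ _ hπ.ne']
    · rwa [hU, if_neg hℓ, if_neg hℓ1, norm_zero, mul_zero]
  · have hκν : ν < κ / 2 := by rw [gt_iff_lt, lt_div_iff₀ hν] at hgt; linarith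
    rw [hU1, Complex.ofReal_re]
    field_simp
    linarith

/-- for Ψ = sin, 𝕌₀(θ) = -1 - cos θ has Fourier coefficients
𝕌₀̂(±1) = -π, and the constant state is linearly stable if κ/ν < 2 and linearly
unstable if κ/ν > 2. -/
theorem sine_kernel_phase_transition
    (κ ν : ℝ) (hκ : 0 < κ) (hν : 0 < ν)
    (Uhat : ℤ → ℂ)
    (hUhat : ∀ ℓ : ℤ, Uhat ℓ = ∫ θ in (-π)..π,
      ((-1 - Real.cos θ : ℝ) : ℂ) * Complex.exp (-Complex.I * (ℓ : ℂ) * (θ : ℂ))) :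
    Uhat 1 = (-π : ℝ) ∧ Uhat (-1) = (-π : ℝ) ∧
    (κ / ν < 2 → ∀ ℓ : ℤ, ℓ ≠ 0 → κ / (2 * π) * ‖Uhat ℓ‖ < ν) ∧
    (κ / ν > 2 → ∃ ℓ : ℤ, ℓ ≠ 0 ∧ -(κ / (2 * π)) * (Uhat ℓ).re > ν) :=
  sine_kernel_phase_transition_general κ ν hν Uhat hUhat
end

section
/- Let g : 𝕋 → ℝ be C² and define J[g] = ∫_{-π}^{π} (cos θ', sin θ') g(θ') dθ' ∈ ℝ², p(θ) = (cos θ, sin θ), and the tangential divergence on the unit circle ∇_p·(F₁,F₂) = −sin θ ∂_θ F₁ + cos θ ∂_θ F₂. Then −∇_p·((I − p⊗p) J[g] g)(θ) = ∂_θ( (∫_{-π}^{π} sin(θ − θ') g(θ') dθ') g(θ) ). -/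
open Real MeasureTheory intervalIntegral

/-- the Frouvelle–Liu sphere formulation coincides with the angular
formulation: -∇_p·((I - p⊗p) J[g] g) = ∂_θ((sin * g) g), where
J[g] = ∫ (cos θ', sin θ') g(θ') dθ' and ∇_p·(F₁,F₂) = -sin θ ∂_θF₁ + cos θ ∂_θF₂. -/
theorem sphere_formulation_eq_angular
    (g : ℝ → ℝ)
    (hg : ContDiff ℝ 2 g)
    (hgper : Function.Periodic g (2 * π))
    (J1 J2 : ℝ)
    (hJ1 : J1 = ∫ θ' in (-π)..π, Real.cos θ' * g θ')
    (hJ2 : J2 = ∫ θ' in (-π)..π, Real.sin θ' * g θ')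
    (F1 F2 : ℝ → ℝ)
    (hF1 : ∀ θ, F1 θ =
      (J1 - (Real.cos θ * J1 + Real.sin θ * J2) * Real.cos θ) * g θ)
    (hF2 : ∀ θ, F2 θ =
      (J2 - (Real.cos θ * J1 + Real.sin θ * J2) * Real.sin θ) * g θ) :
    ∀ θ : ℝ,
      -(-Real.sin θ * deriv F1 θ + Real.cos θ * deriv F2 θ)
        = deriv (fun x => (∫ θ' in (-π)..π, Real.sin (x - θ') * g θ') * g x) θ := by
  intro θ
  have hgc : Continuous g := hg.continuous
  have hgd : ∀ x, HasDerivAt g (deriv g x) x := fun x =>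
    ((hg.differentiable (by norm_num)) x).hasDerivAt
  have hic : IntervalIntegrable (fun θ' => Real.cos θ' * g θ') volume (-π) π :=
    (Real.continuous_cos.mul hgc).intervalIntegrable _ _
  have his : IntervalIntegrable (fun θ' => Real.sin θ' * g θ') volume (-π) π :=
    (Real.continuous_sin.mul hgc).intervalIntegrable _ _
  have key : ∀ x, (∫ θ' in (-π)..π, Real.sin (x - θ') * g θ')
      = Real.sin x * J1 - Real.cos x * J2 := by
    intro x
    rw [hJ1, hJ2, ← intervalIntegral.integral_const_mul,
      ← intervalIntegral.integral_const_mul,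
      ← intervalIntegral.integral_sub (hic.const_mul _) (his.const_mul _)]
    apply intervalIntegral.integral_congr
    intro θ' _
    simp [Real.sin_sub]
    ring
  have hfun : (fun x => (∫ θ' in (-π)..π, Real.sin (x - θ') * g θ') * g x)
      = fun x => (Real.sin x * J1 - Real.cos x * J2) * g x :=
    funext fun x => by rw [key x]
  rw [hfun]
  have hc := Real.hasDerivAt_cos θ
  have hs := Real.hasDerivAt_sin θ
  have hA : HasDerivAt (fun x => Real.cos x * J1 + Real.sin x * J2)
      (-Real.sin θ * J1 + Real.cos θ * J2) θ := (hc.mul_const J1).add (hs.mul_const J2)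
  have hF1fun : F1 = fun x => (J1 - (Real.cos x * J1 + Real.sin x * J2) * Real.cos x) * g x :=
    funext hF1
  have hF2fun : F2 = fun x => (J2 - (Real.cos x * J1 + Real.sin x * J2) * Real.sin x) * g x :=
    funext hF2
  have hD1 : HasDerivAt F1
      ((0 - ((-Real.sin θ * J1 + Real.cos θ * J2) * Real.cos θ
        + (Real.cos θ * J1 + Real.sin θ * J2) * (-Real.sin θ))) * g θ
        + (J1 - (Real.cos θ * J1 + Real.sin θ * J2) * Real.cos θ) * deriv g θ) θ := by
    rw [hF1fun]
    exact ((hasDerivAt_const θ J1).sub (hA.mul hc)).mul (hgd θ)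
  have hD2 : HasDerivAt F2
      ((0 - ((-Real.sin θ * J1 + Real.cos θ * J2) * Real.sin θ
        + (Real.cos θ * J1 + Real.sin θ * J2) * Real.cos θ)) * g θ
        + (J2 - (Real.cos θ * J1 + Real.sin θ * J2) * Real.sin θ) * deriv g θ) θ := by
    rw [hF2fun]
    exact ((hasDerivAt_const θ J2).sub (hA.mul hs)).mul (hgd θ)
  have hD3 : HasDerivAt (fun x => (Real.sin x * J1 - Real.cos x * J2) * g x)
      ((Real.cos θ * J1 - -Real.sin θ * J2) * g θ
        + (Real.sin θ * J1 - Real.cos θ * J2) * deriv g θ) θ :=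
    ((hs.mul_const J1).sub (hc.mul_const J2)).mul (hgd θ)
  rw [hD1.deriv, hD2.deriv, hD3.deriv]
  linear_combination (Real.cos θ * J1 + Real.sin θ * J2) * g θ * (Real.sin_sq_add_cos_sq θ)
end
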